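/- arXiv:0912.3271 — 5 statements merged into one kernel-verified Lean document; each statement's English description precedes it below -/
import Mathlib

section
/- For every invertible real 3×3 matrix C there exist matrices A, B ∈ SO₀(1,2) and real numbers α, β, γ, x, y, z with α·β·γ ≠ 0 such that Aᵀ C B equals either the matrix with rows (α, x, y), (0, β, z), (0, 0, γ) or the matrix with rows (0, β, z), (α, x, y), (0, 0, γ). -/
/-!
With `S = Cᵀ η C`, of signature `(1, 2)`, it suffices to find `B ∈ SO₀(1,2)` and `T` in normal
form with `Tᵀ η T = Bᵀ S B`: then `A = (T (C B)⁻¹)ᵀ` is a Lorentz transformation with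
`Aᵀ C B = T`, and changing the signs of the first two columns of `A` moves it into `SO₀(1,2)`.
Such a `T` comes from the `LDLᵀ` decomposition of `M = Bᵀ S B` as soon as `M₀₀ ≠ 0` and the
leading `2 × 2` minor of `M` is negative (`det M = -(det C B)²` is negative anyway); the sign of
`M₀₀` decides which of the two normal forms occurs. For the minor, rotate space so that the
first two columns of `B` span a plane containing `C⁻¹ e₀`: `S` is negative there, and positive
on the vectors of the plane that `C` maps into `e₀^⊥`. A boost in that plane then makes
`M₀₀ ≠ 0` without changing the minor.
-/

open Matrix

/-- The Minkowski form `η = diag(-1, 1, 1)`. -/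
def etaM : Matrix (Fin 3) (Fin 3) ℝ := Matrix.diagonal ![-1, 1, 1]

/-- Membership in the proper orthochronous Lorentz group `SO₀(1,2)`. -/
def IsSO (A : Matrix (Fin 3) (Fin 3) ℝ) : Prop :=
  Aᵀ * etaM * A = etaM ∧ A.det = 1 ∧ 1 ≤ A 0 0

namespace Lorentz

lemma etaM_mul_etaM : etaM * etaM = 1 := by
  rw [etaM, diagonal_mul_diagonal, ← diagonal_one]
  congr 1
  ext i
  fin_cases i <;> norm_num

lemma transpose_etaM : etaMᵀ = etaM := diagonal_transpose _

lemma det_etaM : etaM.det = -1 := by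
  simp [etaM, det_diagonal, Fin.prod_univ_three]

lemma isSymm_transpose_mul_etaM_mul (V : Matrix (Fin 3) (Fin 3) ℝ) :
    (Vᵀ * etaM * V).IsSymm := by
  simp [IsSymm, transpose_mul, transpose_etaM, Matrix.mul_assoc]

lemma det_transpose_mul_etaM_mul (V : Matrix (Fin 3) (Fin 3) ℝ) :
    (Vᵀ * etaM * V).det = -V.det ^ 2 := by
  rw [det_mul, det_mul, det_transpose, det_etaM]
  ring

lemma det_sq_of_lorentz {W : Matrix (Fin 3) (Fin 3) ℝ} (hW : Wᵀ * etaM * W = etaM) :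
    W.det ^ 2 = 1 := by
  have h := congrArg det hW
  rw [det_mul, det_mul, det_transpose, det_etaM] at h
  linear_combination -h

lemma mul_etaM_mul_transpose_of_lorentz {W : Matrix (Fin 3) (Fin 3) ℝ}
    (hW : Wᵀ * etaM * W = etaM) : W * etaM * Wᵀ = etaM := by
  have hleft : (etaM * Wᵀ * etaM) * W = 1 := by
    calc etaM * Wᵀ * etaM * W = etaM * (Wᵀ * etaM * W) := by simp only [Matrix.mul_assoc]
      _ = 1 := by rw [hW, etaM_mul_etaM]
  have hright : W * (etaM * Wᵀ * etaM) = 1 := mul_eq_one_comm.mp hleft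
  calc W * etaM * Wᵀ = W * (etaM * Wᵀ * etaM) * etaM := by
        simp only [Matrix.mul_assoc, etaM_mul_etaM, Matrix.mul_one]
    _ = etaM := by rw [hright, Matrix.one_mul]

lemma exists_lorentz_transpose_mul_eq {V T : Matrix (Fin 3) (Fin 3) ℝ} (hV : IsUnit V)
    (h : Tᵀ * etaM * T = Vᵀ * etaM * V) :
    ∃ A : Matrix (Fin 3) (Fin 3) ℝ, Aᵀ * etaM * A = etaM ∧ Aᵀ * V = T := by
  have hVdet : IsUnit V.det := (isUnit_iff_isUnit_det V).mp hV
  set W := T * V⁻¹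
  have hW : Wᵀ * etaM * W = etaM := by
    calc Wᵀ * etaM * W = (V⁻¹)ᵀ * (Tᵀ * etaM * T) * V⁻¹ := by
          simp only [W, transpose_mul, Matrix.mul_assoc]
      _ = (V * V⁻¹)ᵀ * etaM * (V * V⁻¹) := by
          rw [h, transpose_mul]; simp only [Matrix.mul_assoc]
      _ = etaM := by simp [mul_nonsing_inv _ hVdet]
  refine ⟨Wᵀ, ?_, ?_⟩
  · rw [transpose_transpose]; exact mul_etaM_mul_transpose_of_lorentz hW
  · rw [transpose_transpose, Matrix.mul_assoc, nonsing_inv_mul _ hVdet, Matrix.mul_one]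

lemma exists_isSO_mul_diagonal {A : Matrix (Fin 3) (Fin 3) ℝ} (hA : Aᵀ * etaM * A = etaM) :
    ∃ ε₀ ε₁ : ℝ, ε₀ ≠ 0 ∧ ε₁ ≠ 0 ∧ IsSO (A * diagonal ![ε₀, ε₁, 1]) := by
  have hdet : A.det = 1 ∨ A.det = -1 := sq_eq_one_iff.mp (det_sq_of_lorentz hA)
  have h00 : A 0 0 ^ 2 = 1 + A 1 0 ^ 2 + A 2 0 ^ 2 := by
    have := congrFun (congrFun hA 0) 0
    simp [etaM, mul_apply, Fin.sum_univ_three] at this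
    linear_combination -this
  set ε₀ : ℝ := if 0 ≤ A 0 0 then 1 else -1
  set ε₁ : ℝ := ε₀ * A.det
  have hε₀ : ε₀ = 1 ∨ ε₀ = -1 := by unfold ε₀; split_ifs <;> simp
  have hε₀sq : ε₀ ^ 2 = 1 := by rcases hε₀ with h | h <;> simp [h]
  have hε₁sq : ε₁ ^ 2 = 1 := by
    rcases hdet with h | h <;> simp [ε₁, h, hε₀sq]
  refine ⟨ε₀, ε₁, by rintro h; simp [h] at hε₀sq, by rintro h; simp [h] at hε₁sq, ?_, ?_, ?_⟩
  · rw [transpose_mul, diagonal_transpose]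
    calc diagonal ![ε₀, ε₁, 1] * Aᵀ * etaM * (A * diagonal ![ε₀, ε₁, 1])
        = diagonal ![ε₀, ε₁, 1] * (Aᵀ * etaM * A) * diagonal ![ε₀, ε₁, 1] := by
          simp only [Matrix.mul_assoc]
      _ = etaM := by
          rw [hA]
          ext i j
          fin_cases i <;> fin_cases j <;> simp [etaM, ← sq, hε₀sq, hε₁sq]
  · rw [det_mul, det_diagonal, Fin.prod_univ_three]
    rcases hdet with h | h <;> simp [ε₁, h] <;> linear_combination hε₀sq
  · have : (A * diagonal ![ε₀, ε₁, 1]) 0 0 = A 0 0 * ε₀ := by simp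
    rw [this]
    unfold ε₀
    split_ifs <;> nlinarith

end Lorentz

open Lorentz

def IsNormalForm (T : Matrix (Fin 3) (Fin 3) ℝ) : Prop :=
  ∃ α β γ x y z : ℝ, α * β * γ ≠ 0 ∧
    (T = !![α, x, y; 0, β, z; 0, 0, γ] ∨ T = !![0, β, z; α, x, y; 0, 0, γ])

lemma IsNormalForm.diagonal_mul {T : Matrix (Fin 3) (Fin 3) ℝ} (hT : IsNormalForm T)
    {ε₀ ε₁ : ℝ} (h₀ : ε₀ ≠ 0) (h₁ : ε₁ ≠ 0) : IsNormalForm (diagonal ![ε₀, ε₁, 1] * T) := by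
  obtain ⟨α, β, γ, x, y, z, hαβγ, rfl | rfl⟩ := hT
  · refine ⟨ε₀ * α, ε₁ * β, γ, ε₀ * x, ε₀ * y, ε₁ * z, ?_, Or.inl ?_⟩
    · convert mul_ne_zero (mul_ne_zero h₀ h₁) hαβγ using 1; ring
    · ext i j; fin_cases i <;> fin_cases j <;> simp
  · refine ⟨ε₁ * α, ε₀ * β, γ, ε₁ * x, ε₁ * y, ε₀ * z, ?_, Or.inr ?_⟩
    · convert mul_ne_zero (mul_ne_zero h₀ h₁) hαβγ using 1; ring
    · ext i j; fin_cases i <;> fin_cases j <;> simp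

/-- The `LDLᵀ` decomposition of a symmetric matrix with nonzero leading principal minors. -/
lemma eq_transpose_mul_diagonal_mul_of_isSymm {M : Matrix (Fin 3) (Fin 3) ℝ} (hM : M.IsSymm)
    (h₁ : M 0 0 ≠ 0) (h₂ : M 0 0 * M 1 1 - M 0 1 ^ 2 ≠ 0) :
    let L : Matrix (Fin 3) (Fin 3) ℝ := !![1, M 0 1 / M 0 0, M 0 2 / M 0 0;
      0, 1, (M 0 0 * M 1 2 - M 0 1 * M 0 2) / (M 0 0 * M 1 1 - M 0 1 ^ 2); 0, 0, 1]
    M = Lᵀ * diagonal ![M 0 0, (M 0 0 * M 1 1 - M 0 1 ^ 2) / M 0 0,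
      M.det / (M 0 0 * M 1 1 - M 0 1 ^ 2)] * L := by
  have h10 := hM.apply 0 1
  have h20 := hM.apply 0 2
  have h21 := hM.apply 1 2
  ext i j
  fin_cases i <;> fin_cases j <;>
    simp [det_fin_three, mul_apply, Fin.sum_univ_three, h10, h20, h21] <;>
    field_simp <;> ring

lemma exists_isNormalForm_transpose_mul_etaM_mul {a b c : ℝ} (hab : a * b < 0) (hc : 0 < c)
    (l₁ l₂ l₃ : ℝ) :
    let L : Matrix (Fin 3) (Fin 3) ℝ := !![1, l₁, l₂; 0, 1, l₃; 0, 0, 1]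
    ∃ T : Matrix (Fin 3) (Fin 3) ℝ, IsNormalForm T ∧
      Tᵀ * etaM * T = Lᵀ * diagonal ![a, b, c] * L := by
  intro L
  suffices ∃ R : Matrix (Fin 3) (Fin 3) ℝ, Rᵀ * etaM * R = diagonal ![a, b, c] ∧
      IsNormalForm (R * L) by
    obtain ⟨R, hR, hRL⟩ := this
    refine ⟨R * L, hRL, ?_⟩
    rw [← hR, transpose_mul]
    simp only [Matrix.mul_assoc]
  have hc' := Real.sq_sqrt hc.le
  have hsc := Real.sqrt_pos.mpr hc
  rcases lt_or_gt_of_ne (left_ne_zero_of_mul hab.ne) with ha | ha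
  · have hb : 0 < b := by nlinarith
    have ha' := Real.sq_sqrt (neg_nonneg.mpr ha.le)
    have hb' := Real.sq_sqrt hb.le
    have hsa := Real.sqrt_pos.mpr (neg_pos.mpr ha)
    have hsb := Real.sqrt_pos.mpr hb
    refine ⟨diagonal ![√(-a), √b, √c], ?_, ?_⟩
    · ext i j; fin_cases i <;> fin_cases j <;> simp [etaM, ← sq, ha', hb', hc']
    · refine ⟨√(-a), √b, √c, √(-a) * l₁, √(-a) * l₂, √b * l₃, by positivity, Or.inl ?_⟩
      ext i j; fin_cases i <;> fin_cases j <;> simp [L]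
  · have hb : b < 0 := by nlinarith
    have ha' := Real.sq_sqrt ha.le
    have hb' := Real.sq_sqrt (neg_nonneg.mpr hb.le)
    have hsa := Real.sqrt_pos.mpr ha
    have hsb := Real.sqrt_pos.mpr (neg_pos.mpr hb)
    refine ⟨!![0, √(-b), 0; √a, 0, 0; 0, 0, √c], ?_, ?_⟩
    · ext i j; fin_cases i <;> fin_cases j <;>
        simp [etaM, mul_apply, Fin.sum_univ_three, ← sq, ha', hb', hc']
    · refine ⟨√a, √(-b), √c, √a * l₁, √a * l₂, √(-b) * l₃, by positivity, Or.inr ?_⟩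
      ext i j; fin_cases i <;> fin_cases j <;> simp [L, mul_apply, Fin.sum_univ_three]

lemma exists_isNormalForm_of_isSymm {M : Matrix (Fin 3) (Fin 3) ℝ} (hM : M.IsSymm)
    (h₁ : M 0 0 ≠ 0) (h₂ : M 0 0 * M 1 1 - M 0 1 ^ 2 < 0) (h₃ : M.det < 0) :
    ∃ T : Matrix (Fin 3) (Fin 3) ℝ, IsNormalForm T ∧ Tᵀ * etaM * T = M := by
  rw [eq_transpose_mul_diagonal_mul_of_isSymm hM h₁ h₂.ne]
  refine exists_isNormalForm_transpose_mul_etaM_mul ?_ (div_pos_of_neg_of_neg h₃ h₂) _ _ _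
  rwa [mul_div_cancel₀ _ h₁]

namespace Lorentz

open Real

noncomputable def spatialRotation (θ : ℝ) : Matrix (Fin 3) (Fin 3) ℝ :=
  !![1, 0, 0; 0, cos θ, -sin θ; 0, sin θ, cos θ]

noncomputable def boost (t : ℝ) : Matrix (Fin 3) (Fin 3) ℝ :=
  !![cosh t, sinh t, 0; sinh t, cosh t, 0; 0, 0, 1]

lemma transpose_mul_etaM_mul_spatialRotation (θ : ℝ) :
    (spatialRotation θ)ᵀ * etaM * spatialRotation θ = etaM := by
  ext i j
  fin_cases i <;> fin_cases j <;>
    simp [spatialRotation, etaM, mul_apply, Fin.sum_univ_three, ← sq, mul_comm]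

lemma transpose_mul_etaM_mul_boost (t : ℝ) : (boost t)ᵀ * etaM * boost t = etaM := by
  have ht := cosh_sq_sub_sinh_sq t
  ext i j
  fin_cases i <;> fin_cases j <;>
    simp [boost, etaM, mul_apply, Fin.sum_univ_three] <;>
    linarith

lemma det_spatialRotation (θ : ℝ) : (spatialRotation θ).det = 1 := by
  simp [spatialRotation, det_fin_three, ← sq]

lemma isSO_spatialRotation_mul_boost (θ t : ℝ) : IsSO (spatialRotation θ * boost t) := by
  refine ⟨?_, ?_, ?_⟩
  · calc (spatialRotation θ * boost t)ᵀ * etaM * (spatialRotation θ * boost t)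
        = (boost t)ᵀ * ((spatialRotation θ)ᵀ * etaM * spatialRotation θ) * boost t := by
          simp only [transpose_mul, Matrix.mul_assoc]
      _ = etaM := by rw [transpose_mul_etaM_mul_spatialRotation, transpose_mul_etaM_mul_boost]
  · rw [det_mul, det_spatialRotation, one_mul]
    simp [boost, det_fin_three, ← sq]
  · simp [spatialRotation, boost, mul_apply, Fin.sum_univ_three, one_le_cosh]

lemma exists_spatialRotation_mulVec_eq (q : Fin 3 → ℝ) :
    ∃ θ x₁ : ℝ, spatialRotation θ *ᵥ ![q 0, x₁, 0] = q := by
  set w : ℂ := ⟨q 1, q 2⟩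
  refine ⟨w.arg, ‖w‖, ?_⟩
  ext i
  fin_cases i
  · simp [spatialRotation]
  · simp [spatialRotation, mulVec, dotProduct, Fin.sum_univ_three]
    rw [mul_comm]; exact Complex.norm_mul_cos_arg w
  · simp [spatialRotation, mulVec, dotProduct, Fin.sum_univ_three]
    rw [mul_comm]; exact Complex.norm_mul_sin_arg w

lemma mul_sub_sq_neg_of_indefinite {a b c x₀ y₀ x₁ y₁ : ℝ}
    (hneg : a * x₀ ^ 2 + 2 * b * x₀ * y₀ + c * y₀ ^ 2 < 0)
    (hpos : 0 < a * x₁ ^ 2 + 2 * b * x₁ * y₁ + c * y₁ ^ 2) : a * c - b ^ 2 < 0 := by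
  by_contra! h
  -- `a Q(x, y) = (a x + b y)² + (a c - b²) y²`, so `Q` would be semidefinite
  rcases lt_trichotomy a 0 with ha | rfl | ha
  · nlinarith [sq_nonneg (a * x₁ + b * y₁), mul_nonneg h (sq_nonneg y₁)]
  · have hb : b = 0 := by nlinarith
    subst hb
    simp only [zero_mul, mul_zero, zero_add] at hneg hpos
    nlinarith [mul_neg_of_neg_of_pos hneg hpos, sq_nonneg (c * y₀ * y₁)]
  · nlinarith [sq_nonneg (a * x₀ + b * y₀), mul_nonneg h (sq_nonneg y₀)]

lemma minkowski_mulVec_eq (V : Matrix (Fin 3) (Fin 3) ℝ) (x₀ x₁ : ℝ) :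
    -(V *ᵥ ![x₀, x₁, 0]) 0 ^ 2 + (V *ᵥ ![x₀, x₁, 0]) 1 ^ 2 + (V *ᵥ ![x₀, x₁, 0]) 2 ^ 2 =
      (Vᵀ * etaM * V) 0 0 * x₀ ^ 2 + 2 * (Vᵀ * etaM * V) 0 1 * x₀ * x₁ +
        (Vᵀ * etaM * V) 1 1 * x₁ ^ 2 := by
  simp [etaM, mulVec, dotProduct, mul_apply, Fin.sum_univ_three]
  ring

lemma gram_leadingMinor_neg_of_mulVec_eq {V : Matrix (Fin 3) (Fin 3) ℝ} (hV : IsUnit V) {q₀ q₁ : ℝ}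
    (hq : V *ᵥ ![q₀, q₁, 0] = ![1, 0, 0]) :
    (Vᵀ * etaM * V) 0 0 * (Vᵀ * etaM * V) 1 1 - (Vᵀ * etaM * V) 0 1 ^ 2 < 0 := by
  have hneg : (Vᵀ * etaM * V) 0 0 * q₀ ^ 2 + 2 * (Vᵀ * etaM * V) 0 1 * q₀ * q₁ +
      (Vᵀ * etaM * V) 1 1 * q₁ ^ 2 < 0 := by
    rw [← minkowski_mulVec_eq, hq]
    simp
  -- a nonzero vector of the plane that `V` maps into the space `y₀ = 0` is positive
  obtain ⟨x₀, x₁, hx, hx0⟩ : ∃ x₀ x₁ : ℝ, ![x₀, x₁, 0] ≠ 0 ∧ V 0 0 * x₀ + V 0 1 * x₁ = 0 := by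
    by_cases h : V 0 0 = 0
    · exact ⟨1, 0, by simp [← List.ofFn_inj], by simp [h]⟩
    · exact ⟨V 0 1, -V 0 0, by simp [← List.ofFn_inj, h], by ring⟩
  set y := V *ᵥ ![x₀, x₁, 0]
  have hy : y ≠ 0 := fun h =>
    hx (mulVec_injective_iff_isUnit.mpr hV (h.trans (mulVec_zero V).symm))
  have hy0 : y 0 = 0 := by simpa [y, mulVec, dotProduct, Fin.sum_univ_three] using hx0
  have hy12 : y 1 ≠ 0 ∨ y 2 ≠ 0 := by
    by_contra! h
    exact hy (by ext i; fin_cases i <;> simp [hy0, h.1, h.2])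
  have hpos : 0 < -y 0 ^ 2 + y 1 ^ 2 + y 2 ^ 2 := by
    rcases hy12 with h | h
    · nlinarith [pow_pos (abs_pos.mpr h) 2, sq_abs (y 1), sq_nonneg (y 2)]
    · nlinarith [pow_pos (abs_pos.mpr h) 2, sq_abs (y 2), sq_nonneg (y 1)]
  rw [minkowski_mulVec_eq] at hpos
  exact mul_sub_sq_neg_of_indefinite hneg hpos

lemma boost_gram_zero_zero {N : Matrix (Fin 3) (Fin 3) ℝ} (hN : N.IsSymm) (t : ℝ) :
    ((boost t)ᵀ * N * boost t) 0 0 =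
      cosh t ^ 2 * N 0 0 + 2 * cosh t * sinh t * N 0 1 + sinh t ^ 2 * N 1 1 := by
  simp [boost, mul_apply, Fin.sum_univ_three, hN.apply 0 1]
  ring

lemma boost_gram_leadingMinor {N : Matrix (Fin 3) (Fin 3) ℝ} (hN : N.IsSymm) (t : ℝ) :
    let N' := (boost t)ᵀ * N * boost t
    N' 0 0 * N' 1 1 - N' 0 1 ^ 2 = N 0 0 * N 1 1 - N 0 1 ^ 2 := by
  have ht := cosh_sq_sub_sinh_sq t
  simp [boost, mul_apply, Fin.sum_univ_three, hN.apply 0 1]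
  linear_combination (cosh t ^ 2 - sinh t ^ 2 + 1) * (N 0 0 * N 1 1 - N 0 1 ^ 2) * ht

lemma exists_boost_gram_ne_zero {N : Matrix (Fin 3) (Fin 3) ℝ} (hN : N.IsSymm)
    (h : N 0 0 * N 1 1 - N 0 1 ^ 2 < 0) : ∃ t : ℝ, ((boost t)ᵀ * N * boost t) 0 0 ≠ 0 := by
  by_cases h₀ : N 0 0 = 0
  · have h₁ : N 0 1 ≠ 0 := by rintro h₁; simp [h₀, h₁] at h
    -- the values at `t = 1` and `t = -1` cannot both vanish
    by_contra! hall
    have hp := hall 1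
    have hm := hall (-1)
    rw [boost_gram_zero_zero hN, h₀] at hp hm
    rw [cosh_neg, sinh_neg] at hm
    have hs : sinh 1 ≠ 0 := (sinh_pos_iff.mpr one_pos).ne'
    have hc : cosh 1 ≠ 0 := (cosh_pos 1).ne'
    apply h₁
    have : 4 * cosh 1 * sinh 1 * N 0 1 = 0 := by linear_combination hp - hm
    simpa [hs, hc] using this
  · exact ⟨0, by simpa [boost_gram_zero_zero hN] using h₀⟩

lemma exists_isSO_gram_leadingMinors {C : Matrix (Fin 3) (Fin 3) ℝ} (hC : IsUnit C) :
    ∃ B : Matrix (Fin 3) (Fin 3) ℝ, IsSO B ∧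
      let M := (C * B)ᵀ * etaM * (C * B)
      M 0 0 ≠ 0 ∧ M 0 0 * M 1 1 - M 0 1 ^ 2 < 0 := by
  obtain ⟨θ, x₁, hθ⟩ := exists_spatialRotation_mulVec_eq (C⁻¹ *ᵥ ![1, 0, 0])
  set V := C * spatialRotation θ
  have hV : IsUnit V :=
    hC.mul ((isUnit_iff_isUnit_det _).mpr (by simp [det_spatialRotation]))
  have hq : V *ᵥ ![(C⁻¹ *ᵥ ![1, 0, 0]) 0, x₁, 0] = ![1, 0, 0] := by
    rw [← mulVec_mulVec, hθ, mulVec_mulVec, mul_nonsing_inv _ ((isUnit_iff_isUnit_det C).mp hC),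
      one_mulVec]
  have hN := isSymm_transpose_mul_etaM_mul V
  have hminor := gram_leadingMinor_neg_of_mulVec_eq hV hq
  obtain ⟨t, ht⟩ := exists_boost_gram_ne_zero hN hminor
  have hM : (C * (spatialRotation θ * boost t))ᵀ * etaM * (C * (spatialRotation θ * boost t)) =
      (boost t)ᵀ * (Vᵀ * etaM * V) * boost t := by
    simp only [V, transpose_mul, Matrix.mul_assoc]
  refine ⟨spatialRotation θ * boost t, isSO_spatialRotation_mul_boost θ t, ?_⟩
  simp only [hM]
  exact ⟨ht, (boost_gram_leadingMinor hN t).trans_lt hminor⟩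

end Lorentz

/-- Every invertible real `3 × 3` matrix `C` can be brought into one of the two normal
forms by the action `(A, C, B) ↦ Aᵀ C B` of `SO₀(1,2) × SO₀(1,2)`. -/
theorem stmt_0 (C : Matrix (Fin 3) (Fin 3) ℝ) (hC : IsUnit C) :
    ∃ A B : Matrix (Fin 3) (Fin 3) ℝ, IsSO A ∧ IsSO B ∧
      ∃ α β γ x y z : ℝ, α * β * γ ≠ 0 ∧
        (Aᵀ * C * B = !![α, x, y; 0, β, z; 0, 0, γ] ∨
          Aᵀ * C * B = !![0, β, z; α, x, y; 0, 0, γ]) := by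
  obtain ⟨B, hB, hM₀, hM₁⟩ := exists_isSO_gram_leadingMinors hC
  have hCB : IsUnit (C * B) :=
    hC.mul ((isUnit_iff_isUnit_det B).mpr (by simp [hB.2.1]))
  have hdet : ((C * B)ᵀ * etaM * (C * B)).det < 0 := by
    rw [det_transpose_mul_etaM_mul, neg_lt_zero]
    exact pow_two_pos_of_ne_zero ((isUnit_iff_isUnit_det _).mp hCB).ne_zero
  obtain ⟨T, hT, hTM⟩ :=
    exists_isNormalForm_of_isSymm (isSymm_transpose_mul_etaM_mul _) hM₀ hM₁ hdet
  obtain ⟨A, hA, hAT⟩ := exists_lorentz_transpose_mul_eq hCB hTM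
  obtain ⟨ε₀, ε₁, h₀, h₁, hASO⟩ := exists_isSO_mul_diagonal hA
  refine ⟨A * diagonal ![ε₀, ε₁, 1], B, hASO, hB, ?_⟩
  have hDT : (A * diagonal ![ε₀, ε₁, 1])ᵀ * C * B = diagonal ![ε₀, ε₁, 1] * T := by
    rw [transpose_mul, diagonal_transpose, ← hAT]
    simp only [Matrix.mul_assoc]
  rw [hDT]
  exact hT.diagonal_mul h₀ h₁
end

section
/- Let C be an invertible real 3×3 matrix with C₁₁ = C₂₁ ≠ 0 and C₃₁ = C₃₂ = 0. Then there exist q₁, q₂ ∈ ℝ such that B(q₁)ᵀ C B(q₂) is upper triangular. -/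
/-!
The boost `B(q)` scales the light-cone vectors `(1, 1, 0)` and `(1, -1, 0)` by `e^q` and `e^{-q}`,
so `4 e^{q₁} e^{q₂}` times the `(1, 0)` entry of `B(q₁)ᵀ C B(q₂)` is a polynomial in
`U = e^{2q₁}` and `V = e^{2q₂}`. When `C₀₀ = C₁₀` it vanishes iff `U V p + U m + V d = d` for
linear combinations `p`, `m` of the entries and `d = C₁₁ - C₀₁`, which is nonzero because
`det C = C₀₀ d C₂₂`. For small `U > 0` the solution `V = (d - U m) / (U p + d)` is close to `1`,
hence positive. The last row is harmless because `B(q)` fixes the third basis vector.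
-/

open Matrix

/-- The hyperbolic boost `B(q) ∈ SO₀(1,2)`. -/
noncomputable def Bq (q : ℝ) : Matrix (Fin 3) (Fin 3) ℝ :=
  !![Real.cosh q, Real.sinh q, 0; Real.sinh q, Real.cosh q, 0; 0, 0, 1]

open Real Filter Topology

theorem exists_pos_pos_mul_mul_add_mul_add_mul_eq {d : ℝ} (p m : ℝ) (hd : d ≠ 0) :
    ∃ U > 0, ∃ V > 0, U * V * p + U * m + V * d = d := by
  have hcont : Continuous fun U : ℝ => (d - U * m) * (U * p + d) := by fun_prop
  have hnear : ∀ᶠ U in 𝓝[>] (0 : ℝ), 0 < (d - U * m) * (U * p + d) := by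
    refine nhdsWithin_le_nhds (continuousAt_const.eventually_lt hcont.continuousAt ?_)
    simpa using mul_self_pos.mpr hd
  obtain ⟨U, hprod, hU⟩ := (hnear.and self_mem_nhdsWithin).exists
  have hden : U * p + d ≠ 0 := by rintro h; simp [h] at hprod
  refine ⟨U, hU, (d - U * m) / (U * p + d), ?_, ?_⟩
  · exact div_pos_iff.mpr <| pos_and_pos_or_neg_and_neg_of_mul_pos hprod
  · field_simp; ring

theorem four_mul_exp_mul_exp_mul_Bq_transpose_mul_mul_Bq_one_zero
    (C : Matrix (Fin 3) (Fin 3) ℝ) (q₁ q₂ : ℝ) :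
    4 * exp q₁ * exp q₂ * ((Bq q₁)ᵀ * C * Bq q₂) 1 0 =
      exp q₁ ^ 2 * exp q₂ ^ 2 * (C 0 0 + C 0 1 + C 1 0 + C 1 1)
        + exp q₁ ^ 2 * (C 0 0 - C 0 1 + C 1 0 - C 1 1)
        - exp q₂ ^ 2 * (C 0 0 + C 0 1 - C 1 0 - C 1 1)
        - (C 0 0 - C 0 1 - C 1 0 + C 1 1) := by
  simp [Bq, mul_apply, Fin.sum_univ_three, cosh_eq, sinh_eq, exp_neg]
  field_simp
  ring

theorem Bq_transpose_mul_mul_Bq_two_of_lt (C : Matrix (Fin 3) (Fin 3) ℝ) (q₁ q₂ : ℝ)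
    (h20 : C 2 0 = 0) (h21 : C 2 1 = 0) {j : Fin 3} (hj : j < 2) :
    ((Bq q₁)ᵀ * C * Bq q₂) 2 j = 0 := by
  fin_cases j <;> simp_all [Bq, mul_apply, Fin.sum_univ_three]

theorem det_fin_three_of_col_zero_eq_of_row_two_zero {R : Type*} [CommRing R]
    (C : Matrix (Fin 3) (Fin 3) R)
    (h10 : C 0 0 = C 1 0) (h20 : C 2 0 = 0) (h21 : C 2 1 = 0) :
    C.det = C 0 0 * (C 1 1 - C 0 1) * C 2 2 := by
  rw [det_fin_three, h20, h21, h10]; ring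

theorem exp_half_log_sq {W : ℝ} (hW : 0 < W) : exp (log W / 2) ^ 2 = W := by
  rw [sq, ← exp_add, add_halves, exp_log hW]

theorem stmt_1_general (C : Matrix (Fin 3) (Fin 3) ℝ) (hC : IsUnit C)
    (h11 : C 0 0 = C 1 0) (h31 : C 2 0 = 0) (h32 : C 2 1 = 0) :
    ∃ q₁ q₂ : ℝ, ∀ i j : Fin 3, j < i → ((Bq q₁)ᵀ * C * Bq q₂) i j = 0 := by
  have hd : C 1 1 - C 0 1 ≠ 0 := by
    have hdet := ((isUnit_iff_isUnit_det C).mp hC).ne_zero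
    rw [det_fin_three_of_col_zero_eq_of_row_two_zero C h11 h31 h32] at hdet
    exact right_ne_zero_of_mul (left_ne_zero_of_mul hdet)
  obtain ⟨U, hU, V, hV, hUV⟩ := exists_pos_pos_mul_mul_add_mul_add_mul_eq
    (C 0 0 + C 0 1 + C 1 0 + C 1 1) (C 0 0 - C 0 1 + C 1 0 - C 1 1) hd
  refine ⟨log U / 2, log V / 2, ?_⟩
  have h10 : ((Bq (log U / 2))ᵀ * C * Bq (log V / 2)) 1 0 = 0 := by
    have hentry :=
      four_mul_exp_mul_exp_mul_Bq_transpose_mul_mul_Bq_one_zero C (log U / 2) (log V / 2)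
    rw [exp_half_log_sq hU, exp_half_log_sq hV] at hentry
    have hzero : 4 * exp (log U / 2) * exp (log V / 2) *
        ((Bq (log U / 2))ᵀ * C * Bq (log V / 2)) 1 0 = 0 := by
      rw [hentry]; linear_combination hUV - (V + 1) * h11
    simpa [exp_ne_zero] using hzero
  intro i j hij
  fin_cases i
  · exact absurd hij (Fin.not_lt_zero j)
  · fin_cases j <;> simp at hij
    exact h10
  · exact Bq_transpose_mul_mul_Bq_two_of_lt C _ _ h31 h32 hij

/-- If `C` is invertible with `C₁₁ = C₂₁ ≠ 0` and `C₃₁ = C₃₂ = 0`, then there are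
`q₁, q₂ ∈ ℝ` such that `B(q₁)ᵀ C B(q₂)` is upper triangular. -/
theorem stmt_1 (C : Matrix (Fin 3) (Fin 3) ℝ) (hC : IsUnit C)
    (h11 : C 0 0 = C 1 0) (hne : C 0 0 ≠ 0) (h31 : C 2 0 = 0) (h32 : C 2 1 = 0) :
    ∃ q₁ q₂ : ℝ, ∀ i j : Fin 3, j < i → ((Bq q₁)ᵀ * C * Bq q₂) i j = 0 :=
  stmt_1_general C hC h11 h31 h32
end

section
/- Let τ ∈ {1, −1}, let α, β, γ, m be nonzero real numbers and let x, y, z be real numbers satisfying the nine equations: (αβ − mγ)x = −αyz; (ταγ − mβ)y = −mxz; (τβγ − mα)z = τγxy; x² + y² + z² − α² + β² + τγ² = 2mβγ/α; z(x² + y² + z² − α² + β² + τγ²) = −2βxy; x² − y² − z² + α² − β² + τγ² = 2mαγ/β − 2xyz/β; y(−x² − y² + z² + α² − β² + τγ²) = −2βzx; −x² + y² − z² + α² + β² − τγ² = 2τmαβ/γ; x(−x² − y² − z² + α² + β² − τγ²) = −2βyz. Then x = y = z = 0. -/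
/-!
Comparing the fourth and fifth equations eliminates the common quadratic factor and gives
`m γ z = -α x y`. If `z = 0`, then `x y = 0`, and the seventh equation (against the sixth) or
the ninth (against the eighth) kills the remaining variable, since `m α β γ ≠ 0`.
If `z ≠ 0`, the third equation yields the constraint `τ α β γ - m α² + τ m γ² = 0` on the
coefficients; with the first, eighth and ninth equations it gives `α y² = 2 m β γ`, then the second
gives `z² = 2 α² - 2 β² - 2 τ γ²`, and the fourth collapses to `α (2 x² + z²) = 0`, which is
impossible over `ℝ`.
-/

section CoefficientSystem

variable {K : Type*} [Field K] {τ α β γ m x y z : K}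

theorem m_mul_γ_mul_z_eq [NeZero (2 : K)] {Q : K} (hβ : β ≠ 0)
    (h4 : Q * α = 2 * m * β * γ) (h5 : z * Q = -(2 * β * x * y)) :
    m * γ * z = -(α * x * y) := by
  refine mul_left_cancel₀ (mul_ne_zero two_ne_zero hβ) ?_
  linear_combination α * h5 - z * h4

theorem y_eq_zero_of_x_eq_zero_of_z_eq_zero [NeZero (2 : K)]
    (hα : α ≠ 0) (hγ : γ ≠ 0) (hm : m ≠ 0)
    (h6 : (x ^ 2 - y ^ 2 - z ^ 2 + α ^ 2 - β ^ 2 + τ * γ ^ 2) * β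
      = 2 * m * α * γ - 2 * x * y * z)
    (e7 : y * (-x ^ 2 - y ^ 2 + z ^ 2 + α ^ 2 - β ^ 2 + τ * γ ^ 2) = -(2 * β * z * x))
    (hx : x = 0) (hz : z = 0) : y = 0 := by
  subst hx hz
  have hP : α ^ 2 - β ^ 2 + τ * γ ^ 2 - y ^ 2 ≠ 0 := by
    refine left_ne_zero_of_mul (b := β) ?_
    rw [show (α ^ 2 - β ^ 2 + τ * γ ^ 2 - y ^ 2) * β = 2 * m * α * γ by linear_combination h6]
    exact mul_ne_zero (mul_ne_zero (mul_ne_zero two_ne_zero hm) hα) hγ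
  have h : y * (α ^ 2 - β ^ 2 + τ * γ ^ 2 - y ^ 2) = 0 := by linear_combination e7
  exact (mul_eq_zero.mp h).resolve_right hP

theorem x_eq_zero_of_y_eq_zero_of_z_eq_zero [NeZero (2 : K)]
    (hτ : τ ≠ 0) (hα : α ≠ 0) (hβ : β ≠ 0) (hm : m ≠ 0)
    (h8 : (-x ^ 2 + y ^ 2 - z ^ 2 + α ^ 2 + β ^ 2 - τ * γ ^ 2) * γ = 2 * τ * m * α * β)
    (e9 : x * (-x ^ 2 - y ^ 2 - z ^ 2 + α ^ 2 + β ^ 2 - τ * γ ^ 2) = -(2 * β * y * z))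
    (hy : y = 0) (hz : z = 0) : x = 0 := by
  subst hy hz
  have hP : α ^ 2 + β ^ 2 - τ * γ ^ 2 - x ^ 2 ≠ 0 := by
    refine left_ne_zero_of_mul (b := γ) ?_
    rw [show (α ^ 2 + β ^ 2 - τ * γ ^ 2 - x ^ 2) * γ = 2 * τ * m * α * β by linear_combination h8]
    exact mul_ne_zero (mul_ne_zero (mul_ne_zero (mul_ne_zero two_ne_zero hτ) hm) hα) hβ
  have h : x * (α ^ 2 + β ^ 2 - τ * γ ^ 2 - x ^ 2) = 0 := by linear_combination e9
  exact (mul_eq_zero.mp h).resolve_right hP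

theorem coeff_constraint_of_z_ne_zero (hz : z ≠ 0)
    (e3 : (τ * β * γ - m * α) * z = τ * γ * x * y) (hA : m * γ * z = -(α * x * y)) :
    τ * α * β * γ - m * α ^ 2 + τ * m * γ ^ 2 = 0 := by
  have h : z * (τ * α * β * γ - m * α ^ 2 + τ * m * γ ^ 2) = 0 := by
    linear_combination α * e3 + τ * γ * hA
  exact (mul_eq_zero.mp h).resolve_left hz

theorem α_mul_y_sq_eq [NeZero (2 : K)] (hτ : τ ^ 2 = 1) (hγ : γ ≠ 0) (hx : x ≠ 0)
    (e1 : (α * β - m * γ) * x = -(α * y * z))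
    (h8 : (-x ^ 2 + y ^ 2 - z ^ 2 + α ^ 2 + β ^ 2 - τ * γ ^ 2) * γ = 2 * τ * m * α * β)
    (e9 : x * (-x ^ 2 - y ^ 2 - z ^ 2 + α ^ 2 + β ^ 2 - τ * γ ^ 2) = -(2 * β * y * z))
    (hS : τ * α * β * γ - m * α ^ 2 + τ * m * γ ^ 2 = 0) :
    α * y ^ 2 = 2 * m * β * γ := by
  have hC : α * β ^ 2 * γ - m * β * γ ^ 2 + α * γ * y ^ 2 - τ * m * α ^ 2 * β = 0 := by
    have h : (2 * x) * (α * β ^ 2 * γ - m * β * γ ^ 2 + α * γ * y ^ 2 - τ * m * α ^ 2 * β) = 0 := by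
      linear_combination 2 * β * γ * e1 - α * γ * e9 + α * x * h8
    exact (mul_eq_zero.mp h).resolve_left (mul_ne_zero two_ne_zero hx)
  refine mul_left_cancel₀ hγ ?_
  linear_combination hC - τ * β * hS + (α * β ^ 2 * γ + m * β * γ ^ 2) * hτ

theorem z_sq_eq (hγ : γ ≠ 0) (hm : m ≠ 0)
    (e2 : (τ * α * γ - m * β) * y = -(m * x * z)) (hA : m * γ * z = -(α * x * y))
    (hS : τ * α * β * γ - m * α ^ 2 + τ * m * γ ^ 2 = 0) (hy : α * y ^ 2 = 2 * m * β * γ) :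
    z ^ 2 = 2 * α ^ 2 - 2 * β ^ 2 - 2 * τ * γ ^ 2 := by
  refine mul_left_cancel₀ (mul_ne_zero hm (mul_ne_zero hm hγ)) ?_
  linear_combination m * z * hA - α * y * e2 + (τ * α * γ - m * β) * hy + 2 * m * γ * hS

end CoefficientSystem

/-- The nine coefficient equations of the second nearly ε-Kähler equation on
`𝔰𝔩(2,ℝ) ⊕ 𝔰𝔩(2,ℝ)` force `x = y = z = 0`. -/
theorem stmt_4 (τ α β γ m x y z : ℝ) (hτ : τ = 1 ∨ τ = -1)
    (hα : α ≠ 0) (hβ : β ≠ 0) (hγ : γ ≠ 0) (hm : m ≠ 0)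
    (e1 : (α * β - m * γ) * x = -(α * y * z))
    (e2 : (τ * α * γ - m * β) * y = -(m * x * z))
    (e3 : (τ * β * γ - m * α) * z = τ * γ * x * y)
    (e4 : x ^ 2 + y ^ 2 + z ^ 2 - α ^ 2 + β ^ 2 + τ * γ ^ 2 = 2 * m * β * γ / α)
    (e5 : z * (x ^ 2 + y ^ 2 + z ^ 2 - α ^ 2 + β ^ 2 + τ * γ ^ 2) = -(2 * β * x * y))
    (e6 : x ^ 2 - y ^ 2 - z ^ 2 + α ^ 2 - β ^ 2 + τ * γ ^ 2
            = 2 * m * α * γ / β - 2 * x * y * z / β)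
    (e7 : y * (-x ^ 2 - y ^ 2 + z ^ 2 + α ^ 2 - β ^ 2 + τ * γ ^ 2) = -(2 * β * z * x))
    (e8 : -x ^ 2 + y ^ 2 - z ^ 2 + α ^ 2 + β ^ 2 - τ * γ ^ 2 = 2 * τ * m * α * β / γ)
    (e9 : x * (-x ^ 2 - y ^ 2 - z ^ 2 + α ^ 2 + β ^ 2 - τ * γ ^ 2) = -(2 * β * y * z)) :
    x = 0 ∧ y = 0 ∧ z = 0 := by
  have hτ2 : τ ^ 2 = 1 := by rcases hτ with rfl | rfl <;> norm_num
  have h4 := (eq_div_iff hα).mp e4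
  have h6 := (eq_div_iff hβ).mp (e6.trans (sub_div _ _ _).symm)
  have h8 := (eq_div_iff hγ).mp e8
  have hA := m_mul_γ_mul_z_eq hβ h4 e5
  by_cases hz : z = 0
  · have hxy : x * y = 0 := by simpa [hz, hα] using hA
    rcases mul_eq_zero.mp hxy with hx | hy
    · exact ⟨hx, y_eq_zero_of_x_eq_zero_of_z_eq_zero hα hγ hm h6 e7 hx hz, hz⟩
    · have hτ0 : τ ≠ 0 := by rintro rfl; norm_num at hτ2
      exact ⟨x_eq_zero_of_y_eq_zero_of_z_eq_zero hτ0 hα hβ hm h8 e9 hy hz, hy, hz⟩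
  · have hS := coeff_constraint_of_z_ne_zero hz e3 hA
    have hx : x ≠ 0 := by rintro rfl; simp [hm, hγ, hz] at hA
    have hy := α_mul_y_sq_eq hτ2 hγ hx e1 h8 e9 hS
    have hz2 := z_sq_eq hγ hm e2 hA hS hy
    have hsum : 2 * x ^ 2 + z ^ 2 = 0 := by
      refine (mul_eq_zero.mp ?_).resolve_left hα
      linear_combination 2 * h4 - 2 * hy - α * hz2
    exact absurd hsum (by positivity)
end

section
/- Let τ ∈ {1, −1}, let α, β, γ be nonzero real numbers and let c₂ ∈ ℝ. Set c₁ := α² + β² + τγ². If 2α⁴ − c₁α² − c₂ = 0, 2β⁴ − c₁β² − c₂ = 0 and 2γ⁴ − τc₁γ² − c₂ = 0, then τ = 1 and α² = β² = γ². -/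
/-!
Put `t₁ = α²`, `t₂ = β²`, `t₃ = τγ²`. Since `τ² = 1` the third equation says that `t₃` is also a
root of `2t² − c₁t − c₂`, and `c₁ = t₁ + t₂ + t₃`. Subtracting the equations for two roots gives
`(t₁ − t₂)(t₁ + t₂ − t₃) = 0`; if two of the `tᵢ` differ, the third one is their sum, and the
second such relation then forces a product of two of the `tᵢ` to vanish. So `t₁ = t₂ = t₃`, and
`τγ² = α² > 0` forces `τ = 1`.
-/

lemma eq_and_eq_of_roots_two_sq_sub_sum_mul {K : Type*} [Field K] [CharZero K] {x y z c : K}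
    (hx₀ : x ≠ 0) (hy₀ : y ≠ 0) (hz₀ : z ≠ 0)
    (hx : 2 * x ^ 2 - (x + y + z) * x - c = 0)
    (hy : 2 * y ^ 2 - (x + y + z) * y - c = 0)
    (hz : 2 * z ^ 2 - (x + y + z) * z - c = 0) :
    x = y ∧ y = z := by
  have hxy : (x - y) * (x + y - z) = 0 := by linear_combination hx - hy
  have hxz : (x - z) * (x + z - y) = 0 := by linear_combination hx - hz
  rcases mul_eq_zero.mp hxy with hxy₀ | hsum
  · obtain rfl : x = y := sub_eq_zero.mp hxy₀
    have : (x - z) * z = 0 := by linear_combination hxz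
    exact ⟨rfl, sub_eq_zero.mp ((mul_eq_zero.mp this).resolve_right hz₀)⟩
  · have : 2 * (x * y) = 0 := by linear_combination (x + z) * hsum - hxz
    simp [hx₀, hy₀] at this

/-- If `α², β², τγ²` are roots of the quadratic `2t² - c₁t - c₂` with
`c₁ = α² + β² + τγ²` and `αβγ ≠ 0`, then `τ = 1` and `α² = β² = γ²`. -/
theorem stmt_5 (τ α β γ c₁ c₂ : ℝ) (hτ : τ = 1 ∨ τ = -1)
    (hα : α ≠ 0) (hβ : β ≠ 0) (hγ : γ ≠ 0)
    (hc₁ : c₁ = α ^ 2 + β ^ 2 + τ * γ ^ 2)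
    (h1 : 2 * α ^ 4 - c₁ * α ^ 2 - c₂ = 0)
    (h2 : 2 * β ^ 4 - c₁ * β ^ 2 - c₂ = 0)
    (h3 : 2 * γ ^ 4 - τ * c₁ * γ ^ 2 - c₂ = 0) :
    τ = 1 ∧ α ^ 2 = β ^ 2 ∧ β ^ 2 = γ ^ 2 := by
  have hτ₀ : τ ≠ 0 := by rcases hτ with rfl | rfl <;> norm_num
  have hτ_sq : τ ^ 2 = 1 := by rcases hτ with rfl | rfl <;> norm_num
  subst hc₁
  obtain ⟨hαβ, hβγ⟩ := eq_and_eq_of_roots_two_sq_sub_sum_mul (c := c₂)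
    (pow_ne_zero 2 hα) (pow_ne_zero 2 hβ) (mul_ne_zero hτ₀ (pow_ne_zero 2 hγ))
    (by linear_combination h1) (by linear_combination h2)
    (by linear_combination h3 + 2 * γ ^ 4 * hτ_sq)
  have hτ_one : τ = 1 := hτ.resolve_right fun h ↦ by
    rw [h] at hβγ
    linarith [sq_pos_of_ne_zero hβ, sq_pos_of_ne_zero hγ]
  exact ⟨hτ_one, hαβ, by simpa [hτ_one] using hβγ⟩
end

section
/- Set ω := (√3/18)(e¹⁴ + e²⁵ + e³⁶), ψ⁺ := (√3/54)(e¹²⁶ − e¹³⁵ + e¹⁵⁶ − e²³⁴ + e²⁴⁶ − e³⁴⁵) and ψ⁻ := −(1/54)(2e¹²³ + e¹²⁶ − e¹³⁵ − e¹⁵⁶ − e²³⁴ − e²⁴⁶ + e³⁴⁵ + 2e⁴⁵⁶). Then dω = 3ψ⁺ and dψ⁻ = 2 ω ∧ ω. -/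
open Finset

/-- Model of the exterior algebra of `(ℝ⁶)*`: an element is given by its coefficients
with respect to the basis monomials `e^S = e^{i₁} ∧ … ∧ e^{i_k}`, `S = {i₁ < … < i_k}`. -/
abbrev E : Type := Finset (Fin 6) → ℝ

/-- The wedge product in this model: the sign is the parity of the number of
inversions when merging the (sorted) index sets. -/
noncomputable def wedge (a b : E) : E := fun S =>
  ∑ T ∈ S.powerset,
    (-1 : ℝ) ^ (((T ×ˢ (S \ T)).filter (fun p => p.2 < p.1)).card) * a T * b (S \ T)

/-- The basis monomial `e^S`. -/
def bas (S : Finset (Fin 6)) : E := fun T => if T = S then 1 else 0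

/-- The volume form `vol = e^{123456}`. -/
noncomputable def vol : E := bas Finset.univ

/-- Interior product (contraction) `v ⌟ a` of a vector `v ∈ ℝ⁶` with a form `a`. -/
noncomputable def contr (v : Fin 6 → ℝ) (a : E) : E := fun S =>
  ∑ i : Fin 6,
    if i ∈ S then 0
    else (-1 : ℝ) ^ ((S.filter (fun s => s < i)).card) * v i * a (insert i S)

/-- `a` is a `k`-form, i.e. concentrated in degree `k`. -/
def IsForm (k : ℕ) (a : E) : Prop := ∀ S, S.card ≠ k → a S = 0

/-- The differential on the generators (`0`-indexed): `de¹ = -e²³`, `de² = e³¹ = -e¹³`,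
`de³ = e¹²`, `de⁴ = -e⁵⁶`, `de⁵ = e⁶⁴ = -e⁴⁶`, `de⁶ = e⁴⁵`
(the structure constants of `𝔰𝔬(1,2) ⊕ 𝔰𝔬(1,2) ≅ 𝔰𝔩(2,ℝ) ⊕ 𝔰𝔩(2,ℝ)`). -/
noncomputable def dgen : Fin 6 → E := fun i =>
  if i = 0 then -bas {1, 2}
  else if i = 1 then -bas {0, 2}
  else if i = 2 then bas {0, 1}
  else if i = 3 then -bas {4, 5}
  else if i = 4 then -bas {3, 5}
  else bas {3, 4}

/-- The Chevalley–Eilenberg differential: the unique degree `+1` antiderivation of the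
exterior algebra extending `dgen`; on a basis monomial `e^S`, `S = {i₁ < … < i_k}`, it is
`d(e^S) = ∑ₜ (-1)^{t-1} e^{S \ {i_t}} ∧ d(e^{i_t})`, extended linearly. -/
noncomputable def d (a : E) : E :=
  ∑ S : Finset (Fin 6), ∑ t ∈ S,
    (a S * (-1 : ℝ) ^ ((S.filter (fun s => s < t)).card)) • wedge (bas (S.erase t)) (dgen t)

/-- The fundamental 2-form of the nearly pseudo-Kähler structure on `SL(2,ℝ) × SL(2,ℝ)`:
`ω = (√3/18)(e¹⁴ + e²⁵ + e³⁶)`. -/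
noncomputable def omega0 : E := (Real.sqrt 3 / 18) • (bas {0, 3} + bas {1, 4} + bas {2, 5})

/-- `ψ⁺ = (√3/54)(e¹²⁶ - e¹³⁵ + e¹⁵⁶ - e²³⁴ + e²⁴⁶ - e³⁴⁵)`. -/
noncomputable def psiP0 : E :=
  (Real.sqrt 3 / 54) •
    (bas {0, 1, 5} - bas {0, 2, 4} + bas {0, 4, 5} - bas {1, 2, 3} + bas {1, 3, 5}
      - bas {2, 3, 4})

/-- `ψ⁻ = -(1/54)(2e¹²³ + e¹²⁶ - e¹³⁵ - e¹⁵⁶ - e²³⁴ - e²⁴⁶ + e³⁴⁵ + 2e⁴⁵⁶)`. -/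
noncomputable def psiM0 : E :=
  (-(1 / 54) : ℝ) •
    ((2 : ℝ) • bas {0, 1, 2} + bas {0, 1, 5} - bas {0, 2, 4} - bas {0, 4, 5}
      - bas {1, 2, 3} - bas {1, 3, 5} + bas {2, 3, 4} + (2 : ℝ) • bas {3, 4, 5})

/-!
All structure constants of `𝔰𝔩(2,ℝ) ⊕ 𝔰𝔩(2,ℝ)` are integers, and `ω`, `ψ⁺`, `ψ⁻` are real
multiples `(√3/18) Ω`, `(√3/54) Ψ⁺`, `-(1/54) Ψ⁻` of integral cochains. The differential and
the wedge product make sense over any commutative ring and commute with ring homomorphisms,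
so both identities reduce to the integral ones `dΩ = Ψ⁺` and `dΨ⁻ = -Ω ∧ Ω`, which are finite
computations; the scalars then match because `3 · √3/54 = √3/18` and
`2 · (√3/18)² = 1/54`.
-/

abbrev Cochain (R : Type*) := Finset (Fin 6) → R

section Coefficients

variable {R R' : Type*} [CommRing R] [CommRing R']

def wedgeOver (a b : Cochain R) : Cochain R := fun S =>
  ∑ T ∈ S.powerset,
    (-1 : R) ^ (((T ×ˢ (S \ T)).filter (fun p => p.2 < p.1)).card) * a T * b (S \ T)

variable (R) in
def basOver (S : Finset (Fin 6)) : Cochain R := fun T => if T = S then 1 else 0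

variable (R) in
def dgenOver : Fin 6 → Cochain R := fun i =>
  if i = 0 then -basOver R {1, 2}
  else if i = 1 then -basOver R {0, 2}
  else if i = 2 then basOver R {0, 1}
  else if i = 3 then -basOver R {4, 5}
  else if i = 4 then -basOver R {3, 5}
  else basOver R {3, 4}

variable (R) in
def dBasisOver (S : Finset (Fin 6)) : Cochain R :=
  ∑ t ∈ S, (-1 : R) ^ ((S.filter (fun s => s < t)).card) •
    wedgeOver (basOver R (S.erase t)) (dgenOver R t)

variable (R) in
def dOver : Cochain R →ₗ[R] Cochain R := Fintype.linearCombination R (dBasisOver R)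

theorem wedgeOver_smul_smul (c c' : R) (a b : Cochain R) :
    wedgeOver (c • a) (c' • b) = (c * c') • wedgeOver a b := by
  funext S
  simp only [wedgeOver, Pi.smul_apply, smul_eq_mul, Finset.mul_sum]
  exact Finset.sum_congr rfl fun T _ => by ring

theorem basOver_eq_single (S : Finset (Fin 6)) : basOver R S = Pi.single S 1 := by
  funext T
  simp [basOver, Pi.single_apply]

theorem dOver_basOver (S : Finset (Fin 6)) : dOver R (basOver R S) = dBasisOver R S := by
  rw [dOver, basOver_eq_single, Fintype.linearCombination_apply_single, one_smul]

theorem RingHom.compLeft_smul (f : R →+* R') (I : Type*) (c : R) (a : I → R) :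
    f.compLeft I (c • a) = f c • f.compLeft I a := by
  funext i
  simp

theorem map_wedgeOver (f : R →+* R') (a b : Cochain R) :
    f.compLeft _ (wedgeOver a b) = wedgeOver (f.compLeft _ a) (f.compLeft _ b) := by
  funext S
  simp [wedgeOver]

theorem map_basOver (f : R →+* R') (S : Finset (Fin 6)) :
    f.compLeft _ (basOver R S) = basOver R' S := by
  funext T
  simp [basOver, apply_ite f]

theorem map_dgenOver (f : R →+* R') (i : Fin 6) :
    f.compLeft _ (dgenOver R i) = dgenOver R' i := by
  unfold dgenOver
  split_ifs <;> simp [map_basOver]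

theorem map_dBasisOver (f : R →+* R') (S : Finset (Fin 6)) :
    f.compLeft _ (dBasisOver R S) = dBasisOver R' S := by
  simp [dBasisOver, RingHom.compLeft_smul, map_wedgeOver, map_basOver, map_dgenOver]

theorem map_dOver (f : R →+* R') (a : Cochain R) :
    f.compLeft _ (dOver R a) = dOver R' (f.compLeft _ a) := by
  simp [dOver, Fintype.linearCombination_apply, RingHom.compLeft_smul, map_dBasisOver]

end Coefficients

theorem wedge_eq_wedgeOver : wedge = wedgeOver := rfl

theorem bas_eq_basOver : bas = basOver ℝ := rfl

theorem d_eq_dOver : d = dOver ℝ := by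
  funext a
  rw [d, dOver, Fintype.linearCombination_apply]
  refine Finset.sum_congr rfl fun S _ => ?_
  rw [dBasisOver, Finset.smul_sum]
  exact Finset.sum_congr rfl fun t _ => mul_smul _ _ _

def omegaInt : Cochain ℤ := basOver ℤ {0, 3} + basOver ℤ {1, 4} + basOver ℤ {2, 5}

def psiPlusInt : Cochain ℤ :=
  basOver ℤ {0, 1, 5} - basOver ℤ {0, 2, 4} + basOver ℤ {0, 4, 5} - basOver ℤ {1, 2, 3}
    + basOver ℤ {1, 3, 5} - basOver ℤ {2, 3, 4}

def psiMinusInt : Cochain ℤ :=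
  2 • basOver ℤ {0, 1, 2} + basOver ℤ {0, 1, 5} - basOver ℤ {0, 2, 4}
    - basOver ℤ {0, 4, 5} - basOver ℤ {1, 2, 3} - basOver ℤ {1, 3, 5} + basOver ℤ {2, 3, 4}
    + 2 • basOver ℤ {3, 4, 5}

local notation "castℝ" => RingHom.compLeft (Int.castRingHom ℝ) (Finset (Fin 6))

theorem omega0_eq : omega0 = (Real.sqrt 3 / 18) • castℝ omegaInt := by
  simp [omega0, omegaInt, bas_eq_basOver, map_basOver]

theorem psiP0_eq : psiP0 = (Real.sqrt 3 / 54) • castℝ psiPlusInt := by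
  simp [psiP0, psiPlusInt, bas_eq_basOver, map_basOver]

theorem psiM0_eq : psiM0 = (-(1 / 54) : ℝ) • castℝ psiMinusInt := by
  simp [psiM0, psiMinusInt, bas_eq_basOver, map_basOver, ofNat_smul_eq_nsmul, map_ofNat]

-- `dOver` sums over all 64 monomials; expanding into the few relevant ones first keeps the
-- evaluation small.
theorem dOver_omegaInt : dOver ℤ omegaInt = psiPlusInt := by
  simp only [omegaInt, map_add, dOver_basOver]
  decide +kernel

theorem dOver_psiMinusInt : dOver ℤ psiMinusInt = -wedgeOver omegaInt omegaInt := by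
  simp only [psiMinusInt, map_add, map_sub, map_nsmul, dOver_basOver]
  decide +kernel

/-- The exterior system `dω = 3ψ⁺`, `dψ⁻ = 2 ω ∧ ω` of the left-invariant nearly
pseudo-Kähler structure on `SL(2,ℝ) × SL(2,ℝ)`. -/
theorem stmt_8 : d omega0 = (3 : ℝ) • psiP0 ∧ d psiM0 = (2 : ℝ) • wedge omega0 omega0 := by
  have hsqrt : Real.sqrt 3 * Real.sqrt 3 = 3 := Real.mul_self_sqrt (by norm_num)
  rw [d_eq_dOver]
  constructor
  · rw [omega0_eq, map_smul, ← map_dOver, dOver_omegaInt, psiP0_eq, smul_smul]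
    congr 1
    ring
  · rw [psiM0_eq, map_smul, ← map_dOver, dOver_psiMinusInt, map_neg, omega0_eq,
      wedge_eq_wedgeOver, wedgeOver_smul_smul, ← map_wedgeOver, smul_smul, smul_neg,
      ← neg_smul]
    congr 1
    linear_combination (-1 / 162 : ℝ) * hsqrt
end
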